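/- arXiv:2105.07436 — 2 statements merged into one kernel-verified Lean document; each statement's English description precedes it below -/
import Mathlib

section
/- Let ℓ ≥ 1 be an integer and let K, T, U, Y be finite-valued random variables such that: K is uniformly distributed on a set of cardinality 2^ℓ; K is independent of T; U = g(K,T) and K = h(U,T) for deterministic functions g and h; and K̂ = φ(Y,T) for a deterministic function φ. Let P_s = P(K̂ = K). Then f_P(P_s) ≤ I(U;Y|T), where f_P(p) = ℓ − H₂(p) − (1−p)·log₂(2^ℓ − 1). -/
open MeasureTheory

namespace SCA

variable {Ω : Type*} [MeasurableSpace Ω]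

/-- `pr μ X x` is the probability `P(X = x)`. -/
noncomputable def pr (μ : Measure Ω) {S : Type*} (X : Ω → S) (x : S) : ℝ :=
  (μ (X ⁻¹' {x})).toReal

/-- Shannon entropy `H(X)` (base-2 logarithm), with the convention `0 · log 0 = 0`. -/
noncomputable def ent (μ : Measure Ω) {S : Type*} [Fintype S] (X : Ω → S) : ℝ :=
  -∑ x : S, pr μ X x * Real.logb 2 (pr μ X x)

/-- Conditional Shannon entropy `H(X | Y)`. -/
noncomputable def condEnt (μ : Measure Ω) {S T : Type*} [Fintype S] [Fintype T]
    (X : Ω → S) (Y : Ω → T) : ℝ :=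
  ent μ (fun ω => (X ω, Y ω)) - ent μ Y

/-- Mutual information `I(X; Y)`. -/
noncomputable def mi (μ : Measure Ω) {S T : Type*} [Fintype S] [Fintype T]
    (X : Ω → S) (Y : Ω → T) : ℝ :=
  ent μ X + ent μ Y - ent μ (fun ω => (X ω, Y ω))

/-- Conditional mutual information `I(X; Y | Z)`. -/
noncomputable def cmi (μ : Measure Ω) {S T U : Type*} [Fintype S] [Fintype T] [Fintype U]
    (X : Ω → S) (Y : Ω → T) (Z : Ω → U) : ℝ :=
  ent μ (fun ω => (X ω, Z ω)) + ent μ (fun ω => (Y ω, Z ω))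
    - ent μ (fun ω => (X ω, Y ω, Z ω)) - ent μ Z

/-- `B` is conditionally independent of `A` given `C`:
`P(A = a, B = b | C = c) = P(A = a | C = c) · P(B = b | C = c)` whenever `P(C = c) > 0`,
written multiplicatively to avoid division. -/
def CondIndepGiven (μ : Measure Ω) {α β γ : Type*}
    (B : Ω → β) (A : Ω → α) (C : Ω → γ) : Prop :=
  ∀ a b c, 0 < pr μ C c →
    pr μ (fun ω => (A ω, B ω, C ω)) (a, b, c) * pr μ C c =
      pr μ (fun ω => (A ω, C ω)) (a, c) * pr μ (fun ω => (B ω, C ω)) (b, c)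

/-- Independence of two random variables. -/
def IndepRV (μ : Measure Ω) {α β : Type*} (A : Ω → α) (B : Ω → β) : Prop :=
  ∀ a b, pr μ (fun ω => (A ω, B ω)) (a, b) = pr μ A a * pr μ B b

/-- The binary entropy function `H₂(p)`, with `H₂(0) = H₂(1) = 0` by the
convention `Real.logb 2 0 = 0`. -/
noncomputable def binEnt (p : ℝ) : ℝ :=
  -(p * Real.logb 2 p) - (1 - p) * Real.logb 2 (1 - p)

/-- The function `f_P(p) = ℓ − H₂(p) − (1 − p) log₂(2^ℓ − 1)` from Fano's inequality. -/
noncomputable def fP (ℓ : ℕ) (p : ℝ) : ℝ :=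
  (ℓ : ℝ) - binEnt p - (1 - p) * Real.logb 2 ((2 : ℝ) ^ ℓ - 1)

/-- Shannon entropy of a probability mass function. -/
noncomputable def entPMF {S : Type*} [Fintype S] (p : S → ℝ) : ℝ :=
  -∑ x : S, p x * Real.logb 2 (p x)

/-- Mutual information `I(X'; Y')` where `X'` has law `P` and `Y'` is obtained by
passing `X'` through the channel `W`. -/
noncomputable def miChannel {𝒳 𝒴 : Type*} [Fintype 𝒳] [Fintype 𝒴]
    (P : 𝒳 → ℝ) (W : 𝒳 → 𝒴 → ℝ) : ℝ :=
  entPMF P + entPMF (fun y => ∑ x, P x * W x y)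
    - entPMF (fun xy : 𝒳 × 𝒴 => P xy.1 * W xy.1 xy.2)

lemma pair_preimage {α β : Type*} (A : Ω → α) (B : Ω → β) (p : α × β) :
    (fun ω => (A ω, B ω)) ⁻¹' {p} = A ⁻¹' {p.1} ∩ B ⁻¹' {p.2} := by
  ext ω; simp [Prod.ext_iff]

lemma pr_nonneg (μ : Measure Ω) {S : Type*} (X : Ω → S) (x : S) : 0 ≤ pr μ X x :=
  ENNReal.toReal_nonneg

lemma pr_finset (μ : Measure Ω) [IsFiniteMeasure μ] {S : Type*} (X : Ω → S)
    (hX : ∀ x, MeasurableSet (X ⁻¹' {x})) (s : Finset S) :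
    (μ (X ⁻¹' ↑s)).toReal = ∑ x ∈ s, pr μ X x := by
  rw [← sum_measure_preimage_singleton s (fun y _ => hX y)]
  exact ENNReal.toReal_sum (fun x _ => measure_ne_top μ _)

lemma pr_sum_one (μ : Measure Ω) [IsProbabilityMeasure μ] {S : Type*} [Fintype S] (X : Ω → S)
    (hX : ∀ x, MeasurableSet (X ⁻¹' {x})) : ∑ x, pr μ X x = 1 := by
  rw [← pr_finset μ X hX Finset.univ]
  simp

lemma pr_snd (μ : Measure Ω) [IsFiniteMeasure μ] {S T : Type*} [Fintype S]
    (X : Ω → S) (Y : Ω → T)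
    (hXY : ∀ p, MeasurableSet ((fun ω => (X ω, Y ω)) ⁻¹' {p})) (y : T) :
    pr μ Y y = ∑ x : S, pr μ (fun ω => (X ω, Y ω)) (x, y) := by
  have hset : Y ⁻¹' {y} = (fun ω => (X ω, Y ω)) ⁻¹'
      ((Finset.univ ×ˢ ({y} : Finset T) : Finset (S × T)) : Set (S × T)) := by
    ext ω; simp [eq_comm]
  have := pr_finset μ (fun ω => (X ω, Y ω)) hXY (Finset.univ ×ˢ ({y} : Finset T))
  rw [pr, hset, this, Finset.sum_product]
  simp

lemma fano (μ : Measure Ω) [IsProbabilityMeasure μ] {𝒦 𝒱 : Type*} [Fintype 𝒦] [Fintype 𝒱]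
    (K : Ω → 𝒦) (V : Ω → 𝒱)
    (hKV : ∀ p : 𝒦 × 𝒱, MeasurableSet ((fun ω => (K ω, V ω)) ⁻¹' {p}))
    (φ : 𝒱 → 𝒦) (M : ℕ) (hM : Fintype.card 𝒦 = M) (h2 : 2 ≤ M)
    (Ps : ℝ) (hPs : Ps = (μ {ω | φ (V ω) = K ω}).toReal) :
    ent μ (fun ω => (K ω, V ω)) ≤ ent μ V + binEnt Ps
      + (1 - Ps) * Real.logb 2 ((M : ℝ) - 1) := by
  classical
  set KV : Ω → 𝒦 × 𝒱 := fun ω => (K ω, V ω) with hKVdef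
  set a : 𝒦 × 𝒱 → ℝ := pr μ KV with hadef
  set pV : 𝒱 → ℝ := pr μ V with hpVdef
  have haneg : ∀ p, 0 ≤ a p := fun p => pr_nonneg μ KV p
  have hsum : ∑ p, a p = 1 := pr_sum_one μ KV hKV
  have hmarg : ∀ v, pV v = ∑ k, a (k, v) := fun v => pr_snd μ K V hKV v
  have hpVle : ∀ p : 𝒦 × 𝒱, a p ≤ pV p.2 := by
    intro p
    rw [hmarg p.2]
    exact Finset.single_le_sum (f := fun k => a (k, p.2))
      (fun i _ => haneg _) (Finset.mem_univ p.1)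
  have hM1 : (0 : ℝ) < (M : ℝ) - 1 := by
    have : (2 : ℝ) ≤ (M : ℝ) := by exact_mod_cast h2
    linarith
  have hPs_eq : Ps = ∑ p ∈ Finset.univ.filter (fun p : 𝒦 × 𝒱 => p.1 = φ p.2), a p := by
    rw [hPs]
    have hseteq : {ω | φ (V ω) = K ω} = KV ⁻¹'
        ((Finset.univ.filter (fun p : 𝒦 × 𝒱 => p.1 = φ p.2) : Finset (𝒦 × 𝒱)) :
          Set (𝒦 × 𝒱)) := by
      ext ω; simp [KV, eq_comm]
    rw [hseteq, pr_finset μ KV hKV]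
  have hPe_eq : 1 - Ps = ∑ p ∈ Finset.univ.filter (fun p : 𝒦 × 𝒱 => ¬ p.1 = φ p.2), a p := by
    have h := Finset.sum_filter_add_sum_filter_not Finset.univ
      (fun p : 𝒦 × 𝒱 => p.1 = φ p.2) a
    rw [hsum] at h
    linarith [hPs_eq]
  have hPs0 : 0 ≤ Ps := by rw [hPs]; exact ENNReal.toReal_nonneg
  have hPe0 : 0 ≤ 1 - Ps := by
    rw [hPe_eq]; exact Finset.sum_nonneg (fun p _ => haneg p)
  have hale_s : ∀ p : 𝒦 × 𝒱, p.1 = φ p.2 → a p ≤ Ps := by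
    intro p hp
    rw [hPs_eq]
    exact Finset.single_le_sum (fun i _ => haneg i) (by simp [hp])
  have hale_e : ∀ p : 𝒦 × 𝒱, ¬ p.1 = φ p.2 → a p ≤ 1 - Ps := by
    intro p hp
    rw [hPe_eq]
    exact Finset.single_le_sum (fun i _ => haneg i) (by simp [hp])
  set c : ℝ := (1 - Ps) / ((M : ℝ) - 1) with hcdef
  have hc0 : 0 ≤ c := div_nonneg hPe0 (le_of_lt hM1)
  set r : 𝒦 × 𝒱 → ℝ := fun p => if p.1 = φ p.2 then Ps else c with hrdef
  set b : 𝒦 × 𝒱 → ℝ := fun p => pV p.2 * r p with hbdef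
  have hrneg : ∀ p, 0 ≤ r p := by
    intro p; dsimp only [r]; split
    · exact hPs0
    · exact hc0
  have hbneg : ∀ p, 0 ≤ b p := fun p => mul_nonneg (pr_nonneg μ V p.2) (hrneg p)
  have hpos : ∀ p, 0 < a p → 0 < pV p.2 ∧ 0 < r p := by
    intro p hp
    refine ⟨lt_of_lt_of_le hp (hpVle p), ?_⟩
    dsimp only [r]; split
    · exact lt_of_lt_of_le hp (hale_s p (by assumption))
    · exact div_pos (lt_of_lt_of_le hp (hale_e p (by assumption))) hM1
  have hbpos : ∀ p, 0 < a p → 0 < b p := fun p hp =>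
    mul_pos (hpos p hp).1 (hpos p hp).2
  have hsumr : ∀ v, ∑ k, r (k, v) = 1 := by
    intro v
    have hterm : ∀ k : 𝒦, r (k, v) = c + (if k = φ v then Ps - c else 0) := by
      intro k; dsimp only [r]; split <;> ring
    rw [Finset.sum_congr rfl (fun k _ => hterm k), Finset.sum_add_distrib,
      Finset.sum_const, Finset.sum_ite_eq' Finset.univ (φ v) (fun _ => Ps - c)]
    simp only [Finset.mem_univ, if_true, Finset.card_univ, hM, nsmul_eq_mul]
    have : ((M : ℝ) - 1) * c = 1 - Ps := by
      rw [hcdef]; field_simp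
    push_cast
    linarith
  have hpVsum : ∑ v, pV v = 1 := by
    rw [Finset.sum_congr rfl (fun v (_ : v ∈ Finset.univ) => hmarg v)]
    rw [← Fintype.sum_prod_type_right (f := fun p : 𝒦 × 𝒱 => a p)]
    exact hsum
  have hbsum : ∑ p, b p = 1 := by
    rw [Fintype.sum_prod_type_right (f := fun p : 𝒦 × 𝒱 => b p)]
    have : ∀ v, ∑ k, b (k, v) = pV v := by
      intro v
      dsimp only [b]
      rw [← Finset.mul_sum, hsumr v, mul_one]
    rw [Finset.sum_congr rfl (fun v _ => this v)]
    exact hpVsum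
  -- Gibbs inequality
  have hgibbs_ln : ∑ p, a p * Real.log (b p) ≤ ∑ p, a p * Real.log (a p) := by
    have hterm : ∀ p, a p * Real.log (b p) - a p * Real.log (a p) ≤ b p - a p := by
      intro p
      rcases eq_or_lt_of_le (haneg p) with h | h
      · rw [← h]; simpa using hbneg p
      · have hb := hbpos p h
        have hlog : Real.log (b p / a p) ≤ b p / a p - 1 :=
          Real.log_le_sub_one_of_pos (div_pos hb h)
        rw [Real.log_div (ne_of_gt hb) (ne_of_gt h)] at hlog
        have h3 := mul_le_mul_of_nonneg_left hlog (le_of_lt h)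
        have h4 : a p * (b p / a p - 1) = b p - a p := by field_simp
        rw [h4] at h3
        linarith [h3]
    have := Finset.sum_le_sum (fun p (_ : p ∈ Finset.univ) => hterm p)
    rw [Finset.sum_sub_distrib, Finset.sum_sub_distrib, hsum, hbsum] at this
    linarith
  have hgibbs : ∑ p, a p * Real.logb 2 (b p) ≤ ∑ p, a p * Real.logb 2 (a p) := by
    have hlog2 : (0 : ℝ) < Real.log 2 := Real.log_pos (by norm_num)
    have e1 : ∀ g : 𝒦 × 𝒱 → ℝ, ∑ p, a p * Real.logb 2 (g p)
        = (∑ p, a p * Real.log (g p)) / Real.log 2 := by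
      intro g
      rw [Finset.sum_div]
      exact Finset.sum_congr rfl (fun p _ => by rw [Real.logb, mul_div_assoc])
    rw [e1 b, e1 a]
    exact (div_le_div_iff_of_pos_right hlog2).mpr hgibbs_ln
  have hsplit : ∑ p, a p * Real.logb 2 (b p)
      = ∑ p, a p * Real.logb 2 (pV p.2) + ∑ p, a p * Real.logb 2 (r p) := by
    rw [← Finset.sum_add_distrib]
    apply Finset.sum_congr rfl
    intro p _
    rcases eq_or_lt_of_le (haneg p) with h | h
    · rw [← h]; ring
    · have h1 := (hpos p h).1
      have h2 := (hpos p h).2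
      have : b p = pV p.2 * r p := rfl
      rw [this, Real.logb_mul (ne_of_gt h1) (ne_of_gt h2)]
      ring
  have hA : ∑ p, a p * Real.logb 2 (pV p.2) = ∑ v, pV v * Real.logb 2 (pV v) := by
    rw [Fintype.sum_prod_type_right (f := fun p : 𝒦 × 𝒱 => a p * Real.logb 2 (pV p.2))]
    apply Finset.sum_congr rfl
    intro v _
    have hr : ∀ x : 𝒦, a (x, v) * Real.logb 2 (pV (x, v).2)
        = a (x, v) * Real.logb 2 (pV v) := fun x => rfl
    rw [Finset.sum_congr rfl (fun x _ => hr x), ← Finset.sum_mul, ← hmarg v]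
  have hB : ∑ p, a p * Real.logb 2 (r p)
      = Ps * Real.logb 2 Ps + (1 - Ps) * Real.logb 2 c := by
    have h1 : ∀ p ∈ Finset.univ.filter (fun p : 𝒦 × 𝒱 => p.1 = φ p.2),
        a p * Real.logb 2 (r p) = a p * Real.logb 2 Ps := by
      intro p hp
      simp only [Finset.mem_filter] at hp
      have : r p = Ps := if_pos hp.2
      rw [this]
    have h2 : ∀ p ∈ Finset.univ.filter (fun p : 𝒦 × 𝒱 => ¬ p.1 = φ p.2),
        a p * Real.logb 2 (r p) = a p * Real.logb 2 c := by
      intro p hp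
      simp only [Finset.mem_filter] at hp
      have : r p = c := if_neg hp.2
      rw [this]
    rw [← Finset.sum_filter_add_sum_filter_not Finset.univ (fun p : 𝒦 × 𝒱 => p.1 = φ p.2)
      (fun p => a p * Real.logb 2 (r p))]
    rw [Finset.sum_congr rfl h1, Finset.sum_congr rfl h2, ← Finset.sum_mul, ← Finset.sum_mul,
      ← hPs_eq, ← hPe_eq]
  have hc_log : (1 - Ps) * Real.logb 2 c
      = (1 - Ps) * Real.logb 2 (1 - Ps) - (1 - Ps) * Real.logb 2 ((M : ℝ) - 1) := by
    rcases eq_or_ne (1 - Ps) 0 with h | h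
    · rw [h]; simp
    · rw [hcdef, Real.logb_div h (ne_of_gt hM1)]; ring
  have hfin := hgibbs
  rw [hsplit, hA, hB] at hfin
  simp only [ent, binEnt, ← hadef, ← hpVdef]
  linarith [hfin, hc_log]

lemma ent_relabel (μ : Measure Ω) {S S' : Type*} [Fintype S] [Fintype S']
    (X : Ω → S) (X' : Ω → S') (F : S → S') (G : S' → S)
    (hF : ∀ ω, X' ω = F (X ω)) (hG : ∀ ω, X ω = G (X' ω)) :
    ent μ X' = ent μ X := by
  classical
  have hsub1 : ∀ x : S, X ⁻¹' {x} ⊆ X' ⁻¹' {F x} := by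
    intro x ω hω
    simp only [Set.mem_preimage, Set.mem_singleton_iff] at *
    rw [hF ω, hω]
  have hsub2 : ∀ x' : S', X' ⁻¹' {x'} ⊆ X ⁻¹' {G x'} := by
    intro x ω hω
    simp only [Set.mem_preimage, Set.mem_singleton_iff] at *
    rw [hG ω, hω]
  have key : ∀ x : S, pr μ X x ≠ 0 → G (F x) = x ∧ pr μ X' (F x) = pr μ X x := by
    intro x hx
    have hne : (X ⁻¹' {x}).Nonempty := by
      rcases Set.eq_empty_or_nonempty (X ⁻¹' {x}) with h | h
      · exfalso; apply hx; simp [pr, h]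
      · exact h
    obtain ⟨ω, hω⟩ := hne
    simp only [Set.mem_preimage, Set.mem_singleton_iff] at hω
    have hGF : G (F x) = x := by rw [← hω, ← hF ω, ← hG ω]
    refine ⟨hGF, ?_⟩
    have hseteq : X' ⁻¹' {F x} = X ⁻¹' {x} := by
      apply Set.Subset.antisymm
      · intro ω' hω'
        have := hsub2 (F x) hω'
        rwa [hGF] at this
      · exact hsub1 x
    simp [pr, hseteq]
  have key' : ∀ x' : S', pr μ X' x' ≠ 0 → F (G x') = x' ∧ pr μ X (G x') = pr μ X' x' := by
    intro x hx
    have hne : (X' ⁻¹' {x}).Nonempty := by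
      rcases Set.eq_empty_or_nonempty (X' ⁻¹' {x}) with h | h
      · exfalso; apply hx; simp [pr, h]
      · exact h
    obtain ⟨ω, hω⟩ := hne
    simp only [Set.mem_preimage, Set.mem_singleton_iff] at hω
    have hFG : F (G x) = x := by rw [← hω, ← hG ω, ← hF ω]
    refine ⟨hFG, ?_⟩
    have hseteq : X ⁻¹' {G x} = X' ⁻¹' {x} := by
      apply Set.Subset.antisymm
      · intro ω' hω'
        have := hsub1 (G x) hω'
        rwa [hFG] at this
      · exact hsub2 x
    simp [pr, hseteq]
  unfold ent
  congr 1
  have h1 : ∑ x' : S', pr μ X' x' * Real.logb 2 (pr μ X' x')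
      = ∑ x' ∈ Finset.univ.filter (fun x' => pr μ X' x' ≠ 0),
          pr μ X' x' * Real.logb 2 (pr μ X' x') := by
    rw [Finset.sum_filter_of_ne]
    intro x _ h hx
    apply h; rw [hx]; ring
  have h2 : ∑ x : S, pr μ X x * Real.logb 2 (pr μ X x)
      = ∑ x ∈ Finset.univ.filter (fun x => pr μ X x ≠ 0),
          pr μ X x * Real.logb 2 (pr μ X x) := by
    rw [Finset.sum_filter_of_ne]
    intro x _ h hx
    apply h; rw [hx]; ring
  rw [h1, h2]
  apply Finset.sum_bij' (fun x' _ => G x') (fun x _ => F x)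
  · intro a ha
    simp only [Finset.mem_filter, Finset.mem_univ, true_and] at *
    rw [(key' a ha).2]; exact ha
  · intro a ha
    simp only [Finset.mem_filter, Finset.mem_univ, true_and] at *
    rw [(key a ha).2]; exact ha
  · intro a ha
    simp only [Finset.mem_filter, Finset.mem_univ, true_and] at ha
    exact (key' a ha).1
  · intro a ha
    simp only [Finset.mem_filter, Finset.mem_univ, true_and] at ha
    exact (key a ha).1
  · intro a ha
    simp only [Finset.mem_filter, Finset.mem_univ, true_and] at ha
    rw [(key' a ha).2]

lemma ent_pair_of_indep (μ : Measure Ω) {S T : Type*} [Fintype S] [Fintype T]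
    (K : Ω → S) (T' : Ω → T) (hKT : IndepRV μ K T')
    (hsK : ∑ k, pr μ K k = 1) (hsT : ∑ t, pr μ T' t = 1) :
    ent μ (fun ω => (K ω, T' ω)) = ent μ K + ent μ T' := by
  unfold ent
  rw [Fintype.sum_prod_type]
  have hterm : ∀ (k : S) (t : T),
      pr μ (fun ω => (K ω, T' ω)) (k, t) * Real.logb 2 (pr μ (fun ω => (K ω, T' ω)) (k, t))
      = pr μ K k * pr μ T' t * Real.logb 2 (pr μ K k)
        + pr μ K k * pr μ T' t * Real.logb 2 (pr μ T' t) := by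
    intro k t
    rw [hKT k t]
    rcases eq_or_ne (pr μ K k) 0 with h | h
    · simp [h]
    rcases eq_or_ne (pr μ T' t) 0 with h' | h'
    · simp [h']
    rw [Real.logb_mul h h']
    ring
  calc -∑ k : S, ∑ t : T,
        pr μ (fun ω => (K ω, T' ω)) (k, t) * Real.logb 2 (pr μ (fun ω => (K ω, T' ω)) (k, t))
      = -∑ k : S, ∑ t : T, (pr μ K k * pr μ T' t * Real.logb 2 (pr μ K k)
        + pr μ K k * pr μ T' t * Real.logb 2 (pr μ T' t)) := by
        congr 1; apply Finset.sum_congr rfl; intro k _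
        apply Finset.sum_congr rfl; intro t _; exact hterm k t
    _ = -((∑ k : S, pr μ K k * Real.logb 2 (pr μ K k)) * (∑ t : T, pr μ T' t)
        + (∑ k : S, pr μ K k) * (∑ t : T, pr μ T' t * Real.logb 2 (pr μ T' t))) := by
        rw [Finset.sum_mul_sum, Finset.sum_mul_sum, ← Finset.sum_add_distrib]
        congr 1; apply Finset.sum_congr rfl; intro k _
        rw [← Finset.sum_add_distrib]
        apply Finset.sum_congr rfl; intro t _; ring
    _ = (-∑ k : S, pr μ K k * Real.logb 2 (pr μ K k))
        + (-∑ t : T, pr μ T' t * Real.logb 2 (pr μ T' t)) := by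
        rw [hsK, hsT]; ring

lemma ent_uniform (μ : Measure Ω) {S : Type*} [Fintype S] (K : Ω → S) (ℓ : ℕ)
    (hcard : Fintype.card S = 2 ^ ℓ) (hunif : ∀ k, pr μ K k = ((2 : ℝ) ^ ℓ)⁻¹) :
    ent μ K = ℓ := by
  unfold ent
  have hlog : Real.logb 2 (((2 : ℝ) ^ ℓ)⁻¹) = -ℓ := by
    rw [Real.logb_inv, Real.logb_pow]
    simp
  simp only [hunif, hlog, Finset.sum_const, hcard, nsmul_eq_mul]
  have h2 : ((2 : ℝ) ^ ℓ) ≠ 0 := by positivity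
  rw [Finset.card_univ, hcard]
  push_cast
  field_simp

/-- Theorem 1 of the paper: Fano-type bound
`f_P(P_s) ≤ I(U;Y|T)` for any attack `K̂ = φ(Y,T)`. -/
theorem stmt12 (ℓ : ℕ) (hℓ : 1 ≤ ℓ)
    {Ω : Type*} [MeasurableSpace Ω] (μ : Measure Ω) [IsProbabilityMeasure μ]
    {𝒦 𝒯 𝒰 𝒴 : Type*}
    [Fintype 𝒦] [Nonempty 𝒦] [MeasurableSpace 𝒦] [MeasurableSingletonClass 𝒦]
    [Fintype 𝒯] [Nonempty 𝒯] [MeasurableSpace 𝒯] [MeasurableSingletonClass 𝒯]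
    [Fintype 𝒰] [Nonempty 𝒰] [MeasurableSpace 𝒰] [MeasurableSingletonClass 𝒰]
    [Fintype 𝒴] [Nonempty 𝒴] [MeasurableSpace 𝒴] [MeasurableSingletonClass 𝒴]
    (K : Ω → 𝒦) (T : Ω → 𝒯) (U : Ω → 𝒰) (Y : Ω → 𝒴)
    (hKm : Measurable K) (hTm : Measurable T) (hUm : Measurable U) (hYm : Measurable Y)
    -- K is uniformly distributed on a set of cardinality 2^ℓ
    (hcard : Fintype.card 𝒦 = 2 ^ ℓ)
    (hunif : ∀ k, pr μ K k = ((2 : ℝ) ^ ℓ)⁻¹)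
    -- K is independent of T
    (hKT : IndepRV μ K T)
    -- U = g(K,T) and K = h(U,T)
    (g : 𝒦 → 𝒯 → 𝒰) (h : 𝒰 → 𝒯 → 𝒦)
    (hU : ∀ ω, U ω = g (K ω) (T ω)) (hK : ∀ ω, K ω = h (U ω) (T ω))
    -- K̂ = φ(Y,T)
    (φ : 𝒴 → 𝒯 → 𝒦) (Khat : Ω → 𝒦) (hKhat : ∀ ω, Khat ω = φ (Y ω) (T ω))
    -- success rate
    (Ps : ℝ) (hPs : Ps = (μ {ω | Khat ω = K ω}).toReal) :
    fP ℓ Ps ≤ cmi μ U Y T := by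
  classical
  have hKpre : ∀ k, MeasurableSet (K ⁻¹' {k}) := fun k => hKm (measurableSet_singleton k)
  have hTpre : ∀ t, MeasurableSet (T ⁻¹' {t}) := fun t => hTm (measurableSet_singleton t)
  have hYpre : ∀ y, MeasurableSet (Y ⁻¹' {y}) := fun y => hYm (measurableSet_singleton y)
  have hVpre : ∀ v : 𝒴 × 𝒯, MeasurableSet ((fun ω => (Y ω, T ω)) ⁻¹' {v}) := by
    intro v; rw [pair_preimage]; exact (hYpre v.1).inter (hTpre v.2)
  have hKVpre : ∀ p : 𝒦 × (𝒴 × 𝒯),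
      MeasurableSet ((fun ω => (K ω, (Y ω, T ω))) ⁻¹' {p}) := by
    intro p
    rw [pair_preimage K (fun ω => (Y ω, T ω)) p]
    exact (hKpre p.1).inter (hVpre p.2)
  have e1 : ent μ (fun ω => (U ω, T ω)) = ent μ (fun ω => (K ω, T ω)) :=
    ent_relabel μ (fun ω => (K ω, T ω)) (fun ω => (U ω, T ω))
      (fun p => (g p.1 p.2, p.2)) (fun p => (h p.1 p.2, p.2))
      (fun ω => by show (U ω, T ω) = (g (K ω) (T ω), T ω); rw [hU ω])
      (fun ω => by show (K ω, T ω) = (h (U ω) (T ω), T ω); rw [hK ω])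
  have e2 : ent μ (fun ω => (U ω, Y ω, T ω)) = ent μ (fun ω => (K ω, Y ω, T ω)) :=
    ent_relabel μ (fun ω => (K ω, Y ω, T ω)) (fun ω => (U ω, Y ω, T ω))
      (fun p => (g p.1 p.2.2, p.2)) (fun p => (h p.1 p.2.2, p.2))
      (fun ω => by show (U ω, Y ω, T ω) = (g (K ω) (T ω), Y ω, T ω); rw [hU ω])
      (fun ω => by show (K ω, Y ω, T ω) = (h (U ω) (T ω), Y ω, T ω); rw [hK ω])
  have e3 : ent μ (fun ω => (K ω, T ω)) = ent μ K + ent μ T :=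
    ent_pair_of_indep μ K T hKT (pr_sum_one μ K hKpre) (pr_sum_one μ T hTpre)
  have e4 : ent μ K = ℓ := ent_uniform μ K ℓ hcard hunif
  have h2M : 2 ≤ 2 ^ ℓ := by
    calc 2 = 2 ^ 1 := by norm_num
    _ ≤ 2 ^ ℓ := Nat.pow_le_pow_right (by norm_num) hℓ
  have hPs' : Ps = (μ {ω | (fun v : 𝒴 × 𝒯 => φ v.1 v.2) ((fun ω => (Y ω, T ω)) ω)
      = K ω}).toReal := by
    have hset : {ω | Khat ω = K ω}
        = {ω | (fun v : 𝒴 × 𝒯 => φ v.1 v.2) ((fun ω => (Y ω, T ω)) ω) = K ω} := by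
      ext ω
      simp only [Set.mem_setOf_eq, hKhat ω]
    rw [hPs, hset]
  have e5 := fano μ K (fun ω => (Y ω, T ω)) hKVpre (fun v => φ v.1 v.2)
    (2 ^ ℓ) hcard h2M Ps hPs'
  have hcast : (((2 : ℕ) ^ ℓ : ℕ) : ℝ) = (2 : ℝ) ^ ℓ := by push_cast; ring
  rw [hcast] at e5
  have e5' : ent μ (fun ω => (K ω, Y ω, T ω)) ≤ ent μ (fun ω => (Y ω, T ω))
      + binEnt Ps + (1 - Ps) * Real.logb 2 ((2 : ℝ) ^ ℓ - 1) := e5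
  show fP ℓ Ps ≤ ent μ (fun ω => (U ω, T ω)) + ent μ (fun ω => (Y ω, T ω))
    - ent μ (fun ω => (U ω, Y ω, T ω)) - ent μ T
  rw [e1, e2, e3, e4]
  unfold fP
  linarith [e5']

end SCA
end

section
/- Let ℓ ≥ 1 be an integer and let K, T, X, Y be finite-valued random variables such that: K is uniformly distributed on a set of cardinality 2^ℓ; K is independent of T; Y is conditionally independent of K given (X,T); and K̂ = φ(Y,T) for a deterministic function φ. Let P_s = P(K̂ = K). Then f_P(P_s) ≤ I(X;Y|T), where f_P(p) = ℓ − H₂(p) − (1−p)·log₂(2^ℓ − 1). -/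
/-!
All the variables are functions of `Z = (K, T, X, Y)`, so every information quantity can be
computed on the finite alphabet of `Z` weighted by the law of `Z`. There, since
`I(K; Y | X, T) = 0`, the chain rule gives `I(X; Y | T) = I(X, K; Y | T) ≥ I(K; Y | T)`, and
independence of `K` and `T` gives `I(K; Y | T) = I(K; Y, T)`. By data processing
`I(K; Y, T) ≥ I(K; K̂)`, and Fano's inequality `H(K | K̂) ≤ H₂(P_s) + (1 - P_s) log₂(2^ℓ - 1)`
together with `H(K) = ℓ` bounds `I(K; K̂)` from below by `f_P(P_s)`.
-/

open MeasureTheory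

namespace SCA

variable {Ω : Type*} [MeasurableSpace Ω]

open Finset

section FiniteProbability

variable {S U V W R : Type*} [Fintype S] [DecidableEq U] [DecidableEq V] [DecidableEq W]
  [DecidableEq R] {q : S → ℝ}

-- A random variable is a map `g` out of a finite sample space `S` with weights `q`;
-- `pmfMap q g` is its law.
noncomputable def pmfMap (q : S → ℝ) (g : S → U) (u : U) : ℝ :=
  ∑ s with g s = u, q s

lemma pmfMap_nonneg (hq0 : ∀ s, 0 ≤ q s) (g : S → U) (u : U) : 0 ≤ pmfMap q g u :=
  sum_nonneg fun s _ => hq0 s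

lemma le_pmfMap (hq0 : ∀ s, 0 ≤ q s) (g : S → U) (s : S) : q s ≤ pmfMap q g (g s) :=
  single_le_sum (fun t _ => hq0 t) (mem_filter.2 ⟨mem_univ s, rfl⟩)

lemma pmfMap_pos (hq0 : ∀ s, 0 ≤ q s) (g : S → U) {s : S} (hs : 0 < q s) :
    0 < pmfMap q g (g s) :=
  hs.trans_le (le_pmfMap hq0 g s)

lemma sum_pmfMap_mul [Fintype U] (g : S → U) (F : U → ℝ) :
    ∑ u, pmfMap q g u * F u = ∑ s, q s * F (g s) := by
  simp_rw [pmfMap, sum_mul]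
  rw [← sum_fiberwise univ g (fun s => q s * F (g s))]
  refine sum_congr rfl fun u _ => sum_congr rfl fun s hs => ?_
  rw [(mem_filter.1 hs).2]

lemma pmfMap_const (u : U) : pmfMap q (fun _ => u) u = ∑ s, q s := by
  simp [pmfMap]

lemma sum_pmfMap [Fintype U] (g : S → U) : ∑ u, pmfMap q g u = ∑ s, q s :=
  sum_fiberwise univ g q

lemma pmfMap_comp_of_injective {f : U → V} (hf : Function.Injective f)
    (g : S → U) (u : U) : pmfMap q (fun s => f (g s)) (f u) = pmfMap q g u := by
  simp only [pmfMap, hf.eq_iff]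

lemma sum_pmfMap_prodMk_left [Fintype U] (a : S → U) (c : S → V) (z : V) :
    ∑ x, pmfMap q (fun s => (a s, c s)) (x, z) = pmfMap q c z := by
  rw [pmfMap, ← sum_fiberwise _ a]
  refine sum_congr rfl fun x _ => ?_
  rw [pmfMap, filter_filter]
  simp only [Prod.mk.injEq, and_comm]

noncomputable def entRV (q : S → ℝ) [Fintype U] (g : S → U) : ℝ :=
  entPMF (pmfMap q g)

variable [Fintype U] [Fintype V] [Fintype W] [Fintype R]

lemma entRV_eq_sum (g : S → U) :
    entRV q g = -∑ s, q s * Real.logb 2 (pmfMap q g (g s)) := by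
  rw [entRV, entPMF, sum_pmfMap_mul g fun u => Real.logb 2 (pmfMap q g u)]

lemma entRV_comp_of_injective {f : U → V} (hf : Function.Injective f) (g : S → U) :
    entRV q (fun s => f (g s)) = entRV q g := by
  simp only [entRV_eq_sum, pmfMap_comp_of_injective hf]

lemma entRV_le_neg_sum_mul_logb (hq0 : ∀ s, 0 ≤ q s) (hq1 : ∑ s, q s = 1) (g : S → U)
    {v : U → ℝ} (hv0 : ∀ u, 0 ≤ v u) (hv1 : ∑ u, v u ≤ 1)
    (hv : ∀ s, 0 < q s → 0 < v (g s)) :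
    entRV q g ≤ -∑ s, q s * Real.logb 2 (v (g s)) := by
  set p := pmfMap q g
  have hlog2 : 0 < Real.log 2 := Real.log_pos one_lt_two
  have pointwise : ∀ s, q s * Real.logb 2 (v (g s)) - q s * Real.logb 2 (p (g s))
      ≤ (q s * (v (g s) / p (g s)) - q s) / Real.log 2 := by
    intro s
    rcases (hq0 s).eq_or_lt with h | h
    · simp [← h]
    have hp : 0 < p (g s) := pmfMap_pos hq0 g h
    have hlog := Real.log_le_sub_one_of_pos (div_pos (hv s h) hp)
    rw [Real.log_div (hv s h).ne' hp.ne'] at hlog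
    calc q s * Real.logb 2 (v (g s)) - q s * Real.logb 2 (p (g s))
        = q s * (Real.log (v (g s)) - Real.log (p (g s))) / Real.log 2 := by
          simp only [Real.logb]; ring
      _ ≤ q s * (v (g s) / p (g s) - 1) / Real.log 2 := by gcongr
      _ = _ := by ring
  have hratio : ∑ s, q s * (v (g s) / p (g s)) ≤ 1 := by
    rw [← sum_pmfMap_mul g fun u => v u / p u]
    refine (sum_le_sum fun u _ => ?_).trans hv1
    rcases (pmfMap_nonneg hq0 g u).eq_or_lt with h | h
    · simp [p, ← h, hv0 u]
    · rw [mul_div_cancel₀ _ h.ne']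
  have hsum := sum_le_sum fun s (_ : s ∈ univ) => pointwise s
  rw [sum_sub_distrib, ← sum_div, sum_sub_distrib, hq1] at hsum
  rw [entRV_eq_sum]
  have : (∑ s, q s * (v (g s) / p (g s)) - 1) / Real.log 2 ≤ 0 :=
    div_nonpos_of_nonpos_of_nonneg (by linarith) hlog2.le
  linarith

lemma entRV_add_entRV_eq (hq0 : ∀ s, 0 ≤ q s) (g₁ : S → U) (g₂ : S → V) (g₃ : S → W)
    (g₄ : S → R)
    (h : ∀ s, 0 < q s → pmfMap q g₁ (g₁ s) * pmfMap q g₂ (g₂ s)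
      = pmfMap q g₃ (g₃ s) * pmfMap q g₄ (g₄ s)) :
    entRV q g₁ + entRV q g₂ = entRV q g₃ + entRV q g₄ := by
  simp only [entRV_eq_sum, ← neg_add, ← sum_add_distrib]
  refine congrArg Neg.neg (sum_congr rfl fun s _ => ?_)
  rcases (hq0 s).eq_or_lt with hs | hs
  · simp [← hs]
  rw [← mul_add, ← mul_add, ← Real.logb_mul, ← Real.logb_mul, h s hs] <;>
    exact (pmfMap_pos hq0 _ hs).ne'

lemma entRV_const (hq1 : ∑ s, q s = 1) (u : U) : entRV q (fun _ => u) = 0 := by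
  simp [entRV_eq_sum, pmfMap_const, hq1]

noncomputable def mutInf (q : S → ℝ) (a : S → U) (b : S → V) : ℝ :=
  entRV q a + entRV q b - entRV q (fun s => (a s, b s))

noncomputable def condMutInf (q : S → ℝ) (a : S → U) (b : S → V) (c : S → W) : ℝ :=
  entRV q (fun s => (a s, c s)) + entRV q (fun s => (b s, c s))
    - entRV q (fun s => (a s, b s, c s)) - entRV q c

lemma mutInf_eq_zero_of_indep (hq0 : ∀ s, 0 ≤ q s) (hq1 : ∑ s, q s = 1) {a : S → U} {b : S → V}
    (h : ∀ x y, pmfMap q (fun s => (a s, b s)) (x, y) = pmfMap q a x * pmfMap q b y) :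
    mutInf q a b = 0 := by
  have := entRV_add_entRV_eq hq0 (fun s => (a s, b s)) (fun _ => ()) a b fun s _ => by
    rw [h, pmfMap_const, hq1, mul_one]
  rw [entRV_const hq1, add_zero] at this
  rw [mutInf, this, sub_self]

lemma condMutInf_eq_zero_of_condIndep (hq0 : ∀ s, 0 ≤ q s) {a : S → U} {b : S → V} {c : S → W}
    (h : ∀ x y z, 0 < pmfMap q c z →
      pmfMap q (fun s => (a s, b s, c s)) (x, y, z) * pmfMap q c z
        = pmfMap q (fun s => (a s, c s)) (x, z) * pmfMap q (fun s => (b s, c s)) (y, z)) :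
    condMutInf q a b c = 0 := by
  have := entRV_add_entRV_eq hq0 (fun s => (a s, b s, c s)) c (fun s => (a s, c s))
    (fun s => (b s, c s)) fun s hs => h _ _ _ (pmfMap_pos hq0 c hs)
  rw [condMutInf]
  linarith

lemma condMutInf_nonneg (hq0 : ∀ s, 0 ≤ q s) (hq1 : ∑ s, q s = 1)
    (a : S → U) (b : S → V) (c : S → W) : 0 ≤ condMutInf q a b c := by
  set pac := pmfMap q (fun s => (a s, c s))
  set pbc := pmfMap q (fun s => (b s, c s))
  set pc := pmfMap q c
  -- compare with the law `p(a,c) p(b,c) / p(c)`, under which `a` and `b` are independent given `c`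
  have hv1 : ∑ x : U × V × W, pac (x.1, x.2.2) * pbc x.2 / pc x.2.2 = 1 := by
    calc ∑ x : U × V × W, pac (x.1, x.2.2) * pbc x.2 / pc x.2.2
        = ∑ z, (∑ x, pac (x, z)) * (∑ y, pbc (y, z)) / pc z := by
          simp only [Fintype.sum_prod_type, sum_mul_sum, sum_div]
          exact (sum_congr rfl fun x _ => sum_comm).trans sum_comm
      _ = ∑ z, pc z * pc z / pc z := by simp only [pac, pbc, pc, sum_pmfMap_prodMk_left]
      _ = 1 := by simp only [mul_self_div_self, pc, sum_pmfMap, hq1]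
  have gibbs : entRV q (fun s => (a s, b s, c s))
      ≤ -∑ s, q s * Real.logb 2 (pac (a s, c s) * pbc (b s, c s) / pc (c s)) :=
    entRV_le_neg_sum_mul_logb hq0 hq1 (fun s => (a s, b s, c s))
      (v := fun x => pac (x.1, x.2.2) * pbc x.2 / pc x.2.2)
      (fun x => div_nonneg (mul_nonneg (pmfMap_nonneg hq0 _ _) (pmfMap_nonneg hq0 _ _))
        (pmfMap_nonneg hq0 _ _)) hv1.le
      fun s hs => div_pos (mul_pos (pmfMap_pos hq0 _ hs) (pmfMap_pos hq0 _ hs))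
        (pmfMap_pos hq0 c hs)
  have cross : ∑ s, q s * Real.logb 2 (pac (a s, c s) * pbc (b s, c s) / pc (c s))
      = ∑ s, q s * Real.logb 2 (pac (a s, c s)) + ∑ s, q s * Real.logb 2 (pbc (b s, c s))
        - ∑ s, q s * Real.logb 2 (pc (c s)) := by
    rw [← sum_add_distrib, ← sum_sub_distrib]
    refine sum_congr rfl fun s _ => ?_
    rcases (hq0 s).eq_or_lt with hs | hs
    · simp [← hs]
    have hac := pmfMap_pos hq0 (fun s => (a s, c s)) hs
    have hbc := pmfMap_pos hq0 (fun s => (b s, c s)) hs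
    rw [Real.logb_div (mul_pos hac hbc).ne' (pmfMap_pos hq0 c hs).ne',
      Real.logb_mul hac.ne' hbc.ne']
    ring
  rw [condMutInf, entRV_eq_sum (fun s => (a s, c s)), entRV_eq_sum (fun s => (b s, c s)),
    entRV_eq_sum c]
  linarith

lemma mutInf_prodMk_right (a : S → U) (b : S → V) (c : S → W) :
    mutInf q a (fun s => (b s, c s)) = mutInf q a c + condMutInf q a b c := by
  rw [mutInf, mutInf, condMutInf]
  ring

lemma entRV_prodMk_left_comm (a : S → U) (b : S → V) (c : S → W) :
    entRV q (fun s => (a s, b s, c s)) = entRV q (fun s => (b s, a s, c s)) :=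
  entRV_comp_of_injective (f := fun x : V × U × W => (x.2.1, x.1, x.2.2))
    (fun _ _ h => by simp_all [Prod.ext_iff]) fun s => (b s, a s, c s)

lemma condMutInf_add_condMutInf_comm (a : S → U) (b : S → V) (c : S → W) (d : S → R) :
    condMutInf q a c d + condMutInf q b c (fun s => (a s, d s))
      = condMutInf q b c d + condMutInf q a c (fun s => (b s, d s)) := by
  -- both sides are `I((a, b); c | d)` by the chain rule
  have h := entRV_comp_of_injective (q := q) (g := fun s => (b s, c s, a s, d s))
    (f := fun x : V × W × U × R => (x.2.2.1, x.2.1, x.1, x.2.2.2))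
    (fun _ _ h => by simp_all [Prod.ext_iff])
  simp only [condMutInf, entRV_prodMk_left_comm c a d, entRV_prodMk_left_comm c b d,
    entRV_prodMk_left_comm b a d] at h ⊢
  linarith

lemma mutInf_comp_right_le (hq0 : ∀ s, 0 ≤ q s) (hq1 : ∑ s, q s = 1)
    (a : S → U) (b : S → V) (f : V → W) :
    mutInf q a (fun s => f (b s)) ≤ mutInf q a b := by
  have h := condMutInf_nonneg hq0 hq1 a b fun s => f (b s)
  have hb : entRV q (fun s => (b s, f (b s))) = entRV q b :=
    entRV_comp_of_injective (f := fun y => (y, f y)) (fun _ _ h => congrArg Prod.fst h) b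
  have hab : entRV q (fun s => (a s, b s, f (b s))) = entRV q (fun s => (a s, b s)) :=
    entRV_comp_of_injective (f := fun x : U × V => (x.1, x.2, f x.2))
      (fun _ _ h => by simp_all [Prod.ext_iff]) fun s => (a s, b s)
  rw [condMutInf, hb, hab] at h
  rw [mutInf, mutInf]
  linarith

lemma entRV_of_uniform {g : S → U} (h : ∀ u, pmfMap q g u = (Fintype.card U : ℝ)⁻¹) :
    entRV q g = Real.logb 2 (Fintype.card U) := by
  rcases eq_or_ne (Fintype.card U : ℝ) 0 with hU | hU
  · simp [entRV, entPMF, h, hU]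
  · simp [entRV, entPMF, h, Real.logb_inv, hU]

lemma sum_mul_logb_ite (P : S → Prop) [DecidablePred P] (x y : ℝ) :
    ∑ s, q s * Real.logb 2 (if P s then x else y)
      = (∑ s with P s, q s) * Real.logb 2 x + (∑ s with ¬P s, q s) * Real.logb 2 y := by
  simp only [apply_ite, sum_ite, sum_mul]

lemma entRV_prodMk_le_fano (hq0 : ∀ s, 0 ≤ q s) (hq1 : ∑ s, q s = 1) (K Kh : S → U)
    (hU : 2 ≤ Fintype.card U) :
    entRV q (fun s => (K s, Kh s)) ≤ entRV q Kh + binEnt (∑ s with Kh s = K s, q s)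
      + (1 - ∑ s with Kh s = K s, q s) * Real.logb 2 (Fintype.card U - 1) := by
  set Ps := ∑ s with Kh s = K s, q s
  set N : ℝ := (Fintype.card U : ℝ)
  have hfail : ∑ s with ¬Kh s = K s, q s = 1 - Ps := by
    rw [← hq1, ← sum_filter_add_sum_filter_not univ fun s => Kh s = K s]
    ring
  have hN : 1 ≤ N - 1 := by
    have : (2 : ℝ) ≤ N := Nat.ofNat_le_cast.mpr hU
    linarith
  -- compare with the law that draws `Kh` as it is, then `K = Kh` with probability `Ps` and
  -- `K` uniform on the `N - 1` other values otherwise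
  set r := (1 - Ps) / (N - 1)
  have hPs : 0 ≤ Ps := sum_nonneg fun s _ => hq0 s
  have hr : 0 ≤ r := div_nonneg (hfail ▸ sum_nonneg fun s _ => hq0 s) (by linarith)
  have hcond_sum (k' : U) : ∑ k, (if k' = k then Ps else r) = 1 := by
    rw [← add_sum_erase _ _ (mem_univ k'), if_pos rfl,
      sum_congr rfl fun k hk => if_neg (ne_of_mem_erase hk).symm, sum_const,
      card_erase_of_mem (mem_univ k'), card_univ, nsmul_eq_mul, Nat.cast_sub (by omega),
      Nat.cast_one, mul_div_cancel₀ _ (by linarith)]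
    ring
  have hwpos (s : S) (hs : 0 < q s) : 0 < if Kh s = K s then Ps else r := by
    split_ifs with h
    · exact hs.trans_le (single_le_sum (fun t _ => hq0 t) (mem_filter.2 ⟨mem_univ s, h⟩))
    · refine div_pos ?_ (by linarith)
      rw [← hfail]
      exact hs.trans_le (single_le_sum (fun t _ => hq0 t) (mem_filter.2 ⟨mem_univ s, h⟩))
  have hv1 : ∑ x : U × U, pmfMap q Kh x.2 * (if x.2 = x.1 then Ps else r) = 1 := by
    rw [Fintype.sum_prod_type, sum_comm]
    simp_rw [← mul_sum, hcond_sum, mul_one, sum_pmfMap, hq1]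
  have gibbs : entRV q (fun s => (K s, Kh s))
      ≤ -∑ s, q s * Real.logb 2 (pmfMap q Kh (Kh s) * if Kh s = K s then Ps else r) :=
    entRV_le_neg_sum_mul_logb hq0 hq1 (fun s => (K s, Kh s))
      (v := fun x => pmfMap q Kh x.2 * if x.2 = x.1 then Ps else r)
      (fun x => mul_nonneg (pmfMap_nonneg hq0 Kh _) (by split_ifs <;> assumption)) hv1.le
      fun s hs => mul_pos (pmfMap_pos hq0 Kh hs) (hwpos s hs)
  have cross : ∑ s, q s * Real.logb 2 (pmfMap q Kh (Kh s) * if Kh s = K s then Ps else r)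
      = ∑ s, q s * Real.logb 2 (pmfMap q Kh (Kh s)) + (Ps * Real.logb 2 Ps
        + (1 - Ps) * Real.logb 2 r) := by
    rw [← hfail, ← sum_mul_logb_ite, ← sum_add_distrib]
    refine sum_congr rfl fun s _ => ?_
    rcases (hq0 s).eq_or_lt with hs | hs
    · simp [← hs]
    rw [Real.logb_mul (pmfMap_pos hq0 Kh hs).ne' (hwpos s hs).ne', mul_add]
  have hlogr : (1 - Ps) * Real.logb 2 r
      = (1 - Ps) * Real.logb 2 (1 - Ps) - (1 - Ps) * Real.logb 2 (N - 1) := by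
    rcases eq_or_ne (1 - Ps) 0 with h | h
    · simp [h]
    · rw [Real.logb_div h (by linarith)]
      ring
  rw [entRV_eq_sum Kh, binEnt]
  linarith

lemma fP_le_mutInf (hq0 : ∀ s, 0 ≤ q s) (hq1 : ∑ s, q s = 1) {K Kh : S → U} {ℓ : ℕ}
    (hℓ : 1 ≤ ℓ) (hcard : Fintype.card U = 2 ^ ℓ) (hunif : ∀ k, pmfMap q K k = ((2 : ℝ) ^ ℓ)⁻¹) :
    fP ℓ (∑ s with Kh s = K s, q s) ≤ mutInf q K Kh := by
  have hK : entRV q K = ℓ := by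
    rw [entRV_of_uniform (by simpa [hcard] using hunif), hcard, Nat.cast_pow, Nat.cast_ofNat,
      Real.logb_pow, Real.logb_self_eq_one one_lt_two, mul_one]
  have hfano := entRV_prodMk_le_fano hq0 hq1 K Kh (hcard ▸ Nat.le_self_pow (by omega) 2)
  rw [hcard, Nat.cast_pow, Nat.cast_ofNat] at hfano
  rw [mutInf, fP]
  linarith

theorem fP_le_condMutInf (hq0 : ∀ s, 0 ≤ q s) (hq1 : ∑ s, q s = 1)
    {K : S → U} {T : S → V} {X : S → R} {Y : S → W} (φ : W → V → U) {ℓ : ℕ}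
    (hℓ : 1 ≤ ℓ) (hcard : Fintype.card U = 2 ^ ℓ) (hunif : ∀ k, pmfMap q K k = ((2 : ℝ) ^ ℓ)⁻¹)
    (hKT : ∀ k t, pmfMap q (fun s => (K s, T s)) (k, t) = pmfMap q K k * pmfMap q T t)
    (hYK : ∀ k y c, 0 < pmfMap q (fun s => (X s, T s)) c →
      pmfMap q (fun s => (K s, Y s, X s, T s)) (k, y, c) * pmfMap q (fun s => (X s, T s)) c
        = pmfMap q (fun s => (K s, X s, T s)) (k, c)
          * pmfMap q (fun s => (Y s, X s, T s)) (y, c)) :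
    fP ℓ (∑ s with φ (Y s) (T s) = K s, q s) ≤ condMutInf q X Y T :=
  calc fP ℓ (∑ s with φ (Y s) (T s) = K s, q s)
      ≤ mutInf q K (fun s => φ (Y s) (T s)) := fP_le_mutInf hq0 hq1 hℓ hcard hunif
    _ ≤ mutInf q K (fun s => (Y s, T s)) :=
      mutInf_comp_right_le hq0 hq1 K (fun s => (Y s, T s)) fun p => φ p.1 p.2
    _ = condMutInf q K Y T := by
      rw [mutInf_prodMk_right, mutInf_eq_zero_of_indep hq0 hq1 hKT, zero_add]
    _ ≤ condMutInf q K Y T + condMutInf q X Y (fun s => (K s, T s)) :=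
      le_add_of_nonneg_right (condMutInf_nonneg hq0 hq1 _ _ _)
    _ = condMutInf q X Y T + condMutInf q K Y (fun s => (X s, T s)) :=
      condMutInf_add_condMutInf_comm K X Y T
    _ = condMutInf q X Y T := by
      rw [condMutInf_eq_zero_of_condIndep (c := fun s => (X s, T s)) hq0 hYK, add_zero]

end FiniteProbability

section RandomVariables

variable (μ : Measure Ω) {S : Type*} [MeasurableSpace S] [MeasurableSingletonClass S]
  {Z : Ω → S}

lemma toReal_measure_preimage_eq_sum_pr [IsFiniteMeasure μ] (hZ : Measurable Z)
    (B : Finset S) : (μ (Z ⁻¹' B)).toReal = ∑ z ∈ B, pr μ Z z :=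
  (sum_measureReal_preimage_singleton B fun z _ => hZ (measurableSet_singleton z)).symm

variable [Fintype S]

lemma sum_pr_eq_one [IsProbabilityMeasure μ] (hZ : Measurable Z) : ∑ z, pr μ Z z = 1 := by
  rw [← toReal_measure_preimage_eq_sum_pr μ hZ, coe_univ, Set.preimage_univ, measure_univ,
    ENNReal.toReal_one]

variable [IsFiniteMeasure μ] {U V W : Type*} [DecidableEq U] [DecidableEq V] [DecidableEq W]

lemma pr_comp (hZ : Measurable Z) (g : S → U) (u : U) :
    pr μ (fun ω => g (Z ω)) u = pmfMap (pr μ Z) g u := by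
  rw [pmfMap, ← toReal_measure_preimage_eq_sum_pr μ hZ, pr]
  congr
  ext ω
  simp

variable [Fintype U] [Fintype V] [Fintype W]

lemma ent_comp (hZ : Measurable Z) (g : S → U) :
    ent μ (fun ω => g (Z ω)) = entRV (pr μ Z) g := by
  simp only [ent, entRV, entPMF, pr_comp μ hZ]

lemma cmi_comp (hZ : Measurable Z) (a : S → U) (b : S → V) (c : S → W) :
    cmi μ (fun ω => a (Z ω)) (fun ω => b (Z ω)) (fun ω => c (Z ω))
      = condMutInf (pr μ Z) a b c := by
  simp only [cmi, condMutInf, ← ent_comp μ hZ]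

end RandomVariables

theorem stmt13_general (ℓ : ℕ) (hℓ : 1 ≤ ℓ)
    {Ω : Type*} [MeasurableSpace Ω] (μ : Measure Ω) [IsProbabilityMeasure μ]
    {𝒦 𝒯 𝒳 𝒴 : Type*}
    [Fintype 𝒦] [MeasurableSpace 𝒦] [MeasurableSingletonClass 𝒦]
    [Fintype 𝒯] [MeasurableSpace 𝒯] [MeasurableSingletonClass 𝒯]
    [Fintype 𝒳] [MeasurableSpace 𝒳] [MeasurableSingletonClass 𝒳]
    [Fintype 𝒴] [MeasurableSpace 𝒴] [MeasurableSingletonClass 𝒴]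
    (K : Ω → 𝒦) (T : Ω → 𝒯) (X : Ω → 𝒳) (Y : Ω → 𝒴)
    (hKm : Measurable K) (hTm : Measurable T) (hXm : Measurable X) (hYm : Measurable Y)
    -- K is uniformly distributed on a set of cardinality 2^ℓ
    (hcard : Fintype.card 𝒦 = 2 ^ ℓ)
    (hunif : ∀ k, pr μ K k = ((2 : ℝ) ^ ℓ)⁻¹)
    -- K is independent of T
    (hKT : IndepRV μ K T)
    -- Y is conditionally independent of K given (X,T)
    (hYK : CondIndepGiven μ Y K (fun ω => (X ω, T ω)))
    -- K̂ = φ(Y,T)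
    (φ : 𝒴 → 𝒯 → 𝒦) (Khat : Ω → 𝒦) (hKhat : ∀ ω, Khat ω = φ (Y ω) (T ω))
    -- success rate
    (Ps : ℝ) (hPs : Ps = (μ {ω | Khat ω = K ω}).toReal) :
    fP ℓ Ps ≤ cmi μ X Y T := by
  classical
  let Z : Ω → 𝒦 × 𝒯 × 𝒳 × 𝒴 := fun ω => (K ω, T ω, X ω, Y ω)
  have hZ : Measurable Z := hKm.prodMk (hTm.prodMk (hXm.prodMk hYm))
  have hPsZ : Ps = ∑ z with φ z.2.2.2 z.2.1 = z.1, pr μ Z z := by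
    rw [hPs, ← toReal_measure_preimage_eq_sum_pr μ hZ]
    congr
    ext ω
    simp [Z, hKhat]
  rw [hPsZ]
  refine (fP_le_condMutInf (q := pr μ Z) (fun _ => ENNReal.toReal_nonneg) (sum_pr_eq_one μ hZ)
    (K := fun z => z.1) (T := fun z => z.2.1) (Y := fun z => z.2.2.2) (X := fun z => z.2.2.1)
    φ hℓ hcard ?_ ?_ ?_).trans_eq
    (cmi_comp μ hZ (fun z => z.2.2.1) (fun z => z.2.2.2) (fun z => z.2.1)).symm
  · exact fun k => by simpa only [← pr_comp μ hZ] using hunif k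
  · exact fun k t => by simpa only [← pr_comp μ hZ] using hKT k t
  · intro k y c hc
    simp only [← pr_comp μ hZ] at hc ⊢
    exact hYK k y c hc

/-- Fano-type bound `f_P(P_s) ≤ I(X;Y|T)` when `Y ⫫ K | (X,T)`. -/
theorem stmt13 (ℓ : ℕ) (hℓ : 1 ≤ ℓ)
    {Ω : Type*} [MeasurableSpace Ω] (μ : Measure Ω) [IsProbabilityMeasure μ]
    {𝒦 𝒯 𝒳 𝒴 : Type*}
    [Fintype 𝒦] [Nonempty 𝒦] [MeasurableSpace 𝒦] [MeasurableSingletonClass 𝒦]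
    [Fintype 𝒯] [Nonempty 𝒯] [MeasurableSpace 𝒯] [MeasurableSingletonClass 𝒯]
    [Fintype 𝒳] [Nonempty 𝒳] [MeasurableSpace 𝒳] [MeasurableSingletonClass 𝒳]
    [Fintype 𝒴] [Nonempty 𝒴] [MeasurableSpace 𝒴] [MeasurableSingletonClass 𝒴]
    (K : Ω → 𝒦) (T : Ω → 𝒯) (X : Ω → 𝒳) (Y : Ω → 𝒴)
    (hKm : Measurable K) (hTm : Measurable T) (hXm : Measurable X) (hYm : Measurable Y)
    -- K is uniformly distributed on a set of cardinality 2^ℓ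
    (hcard : Fintype.card 𝒦 = 2 ^ ℓ)
    (hunif : ∀ k, pr μ K k = ((2 : ℝ) ^ ℓ)⁻¹)
    -- K is independent of T
    (hKT : IndepRV μ K T)
    -- Y is conditionally independent of K given (X,T)
    (hYK : CondIndepGiven μ Y K (fun ω => (X ω, T ω)))
    -- K̂ = φ(Y,T)
    (φ : 𝒴 → 𝒯 → 𝒦) (Khat : Ω → 𝒦) (hKhat : ∀ ω, Khat ω = φ (Y ω) (T ω))
    -- success rate
    (Ps : ℝ) (hPs : Ps = (μ {ω | Khat ω = K ω}).toReal) :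
    fP ℓ Ps ≤ cmi μ X Y T :=
  stmt13_general ℓ hℓ μ K T X Y hKm hTm hXm hYm hcard hunif hKT hYK φ Khat hKhat Ps hPs

end SCA
end
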